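/- arXiv:2109.13586 — 6 statements merged into one kernel-verified Lean document; each statement's English description precedes it below -/
import Mathlib

section
/- Let 0 < α < 1, let φ : ℝ^L → ℝ^L be continuous, let x : [0,T] → ℝ^L be continuous, and let x₀ ∈ ℝ^L. Then the function t ↦ x₀ + (1/Γ(α)) ∫_0^t (t−s)^{α−1} φ(x(s)) ds is continuous on [0,T]; that is, the fractional Volterra operator T_{x₀} maps C([0,T], ℝ^L) into C([0,T], ℝ^L). -/
/-!
The substitution `s = t σ` turns `∫₀ᵗ (t - s)^(α-1) f(s) ds` into
`t^α ∫₀¹ (1 - σ)^(α-1) f(t σ) dσ`, which moves the parameter `t` out of the singular kernel.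
The new integrand is continuous in `t` and dominated by `(1 - σ)^(α-1) · sup |f|`, integrable
for `α > 0`, so dominated convergence gives continuity.
-/

open Set MeasureTheory intervalIntegral

variable {E : Type*} [NormedAddCommGroup E] [NormedSpace ℝ E]

lemma intervalIntegrable_one_sub_rpow {α : ℝ} (hα : 0 < α) :
    IntervalIntegrable (fun σ : ℝ => (1 - σ) ^ (α - 1)) volume 0 1 := by
  simpa using ((intervalIntegrable_rpow' (a := 0) (b := 1) (by linarith : -1 < α - 1)).comp_sub_left
    1).symm

lemma integral_sub_rpow_smul_eq_rpow_smul_integral {α t : ℝ} (hα : α ≠ 0) (ht : 0 ≤ t)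
    (f : ℝ → E) :
    ∫ s in 0..t, (t - s) ^ (α - 1) • f s
      = t ^ α • ∫ σ in 0..1, (1 - σ) ^ (α - 1) • f (t * σ) := by
  have hsplit : t ^ α = t * t ^ (α - 1) := by
    rw [← Real.rpow_one_add' ht (by simpa using hα), add_sub_cancel]
  have hscale : EqOn (fun σ => t ^ (α - 1) • (1 - σ) ^ (α - 1) • f (t * σ))
      (fun σ => (t - t * σ) ^ (α - 1) • f (t * σ)) (uIcc 0 1) := by
    intro σ hσ
    rw [uIcc_of_le zero_le_one] at hσ
    dsimp only
    rw [smul_smul, ← Real.mul_rpow ht (by linarith [hσ.2]), mul_one_sub]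
  rw [hsplit, mul_smul, ← intervalIntegral.integral_smul, integral_congr hscale,
    smul_integral_comp_mul_left (fun s => (t - s) ^ (α - 1) • f s), mul_zero, mul_one]

lemma continuousOn_integral_one_sub_rpow_smul_comp_mul {α T : ℝ} (hα : 0 < α) {f : ℝ → E}
    (hf : ContinuousOn f (Icc 0 T)) :
    ContinuousOn (fun t => ∫ σ in 0..1, (1 - σ) ^ (α - 1) • f (t * σ)) (Icc 0 T) := by
  have hmaps : ∀ t ∈ Icc 0 T, ∀ σ ∈ Ioc (0 : ℝ) 1, t * σ ∈ Icc 0 T := fun t ht σ hσ =>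
    ⟨mul_nonneg ht.1 hσ.1.le, (mul_le_of_le_one_right ht.1 hσ.2).trans ht.2⟩
  obtain ⟨M, hM⟩ := isCompact_Icc.exists_bound_of_continuousOn hf
  simp_rw [integral_of_le zero_le_one]
  refine continuousOn_of_dominated (bound := fun σ => (1 - σ) ^ (α - 1) * M) ?_ ?_ ?_ ?_
  · intro t ht
    refine (Measurable.aestronglyMeasurable (by fun_prop)).smul ?_
    exact (hf.comp (continuousOn_const.mul continuousOn_id) (hmaps t ht)).aestronglyMeasurable
      measurableSet_Ioc
  · intro t ht
    filter_upwards [ae_restrict_mem measurableSet_Ioc] with σ hσ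
    have hkernel : 0 ≤ (1 - σ) ^ (α - 1) := Real.rpow_nonneg (by linarith [hσ.2]) _
    rw [norm_smul, Real.norm_of_nonneg hkernel]
    exact mul_le_mul_of_nonneg_left (hM _ (hmaps t ht σ hσ)) hkernel
  · exact ((intervalIntegrable_one_sub_rpow hα).mul_const M).1
  · filter_upwards [ae_restrict_mem measurableSet_Ioc] with σ hσ
    exact continuousOn_const.smul (hf.comp (continuousOn_id.mul continuousOn_const)
      fun t ht => hmaps t ht σ hσ)

theorem continuousOn_integral_sub_rpow_smul {α T : ℝ} (hα : 0 < α) {f : ℝ → E}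
    (hf : ContinuousOn f (Icc 0 T)) :
    ContinuousOn (fun t => ∫ s in 0..t, (t - s) ^ (α - 1) • f s) (Icc 0 T) :=
  ((continuousOn_id.rpow_const fun _ _ => Or.inr hα.le).smul
    (continuousOn_integral_one_sub_rpow_smul_comp_mul hα hf)).congr fun _ ht =>
    integral_sub_rpow_smul_eq_rpow_smul_integral hα.ne' ht.1 f

theorem volterra_operator_maps_continuous_general
    (T : ℝ) (L : ℕ) (α : ℝ) (hα : 0 < α)
    (φ : (Fin L → ℝ) → (Fin L → ℝ)) (hφ : Continuous φ)
    (x : ℝ → Fin L → ℝ) (hx : ContinuousOn x (Set.Icc 0 T))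
    (x₀ : Fin L → ℝ) :
    ContinuousOn
      (fun t => fun k : Fin L =>
        x₀ k + (1 / Real.Gamma α) * ∫ s in (0:ℝ)..t, (t - s) ^ (α - 1) * φ (x s) k)
      (Set.Icc 0 T) :=
  continuousOn_pi.2 fun k => continuousOn_const.add <| continuousOn_const.mul <|
    continuousOn_integral_sub_rpow_smul hα
      ((continuous_apply k).comp_continuousOn (hφ.comp_continuousOn hx))

/-- For `0 < α < 1`, continuous `φ : ℝ^L → ℝ^L`, continuous `x : [0,T] → ℝ^L`
and `x₀ ∈ ℝ^L`, the function
`t ↦ x₀ + (1/Γ(α)) ∫_0^t (t-s)^{α-1} φ(x(s)) ds` is continuous on `[0,T]`: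
the fractional Volterra operator maps `C([0,T], ℝ^L)` into itself. -/
theorem volterra_operator_maps_continuous
    (T : ℝ) (hT : 0 < T) (L : ℕ) (hL : 1 ≤ L) (α : ℝ) (hα : 0 < α) (hα1 : α < 1)
    (φ : (Fin L → ℝ) → (Fin L → ℝ)) (hφ : Continuous φ)
    (x : ℝ → Fin L → ℝ) (hx : ContinuousOn x (Set.Icc 0 T))
    (x₀ : Fin L → ℝ) :
    ContinuousOn
      (fun t => fun k : Fin L =>
        x₀ k + (1 / Real.Gamma α) * ∫ s in (0:ℝ)..t, (t - s) ^ (α - 1) * φ (x s) k)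
      (Set.Icc 0 T) :=
  volterra_operator_maps_continuous_general T L α hα φ hφ x hx x₀
end

section
/- Let 0 < α < 1, let φ : ℝ^L → ℝ^L be continuous and K-Lipschitz componentwise (in the ℓ¹ sense), and fix x₀ ∈ ℝ^L and N > 0. Then for all continuous x, y : [0,T] → ℝ^L, ‖T_{x₀} x − T_{x₀} y‖* ≤ (L·K / N^{α}) · ‖x − y‖*, where ‖z‖* = Σ_{k=1}^{L} sup_{t∈[0,T]} e^{−N t} |z_k(t)|. -/
/-!
The Riemann–Liouville integral `I^α` has the kernel `(t - s)^(α-1) / Γ(α)`, and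
`∫_0^t (t-s)^(α-1) e^{Ns} ds = e^{Nt} ∫_0^t u^(α-1) e^{-Nu} du ≤ e^{Nt} Γ(α) / N^α`.
Hence `e^{-Nt} |I^α g (t)| ≤ C / N^α` whenever `|g s| ≤ C e^{Ns}`: the operator `I^α` has norm
at most `N^{-α}` for the weight `e^{-Nt}`. The difference `T_{x₀} x - T_{x₀} y` is `I^α` applied
to `φ_k ∘ x - φ_k ∘ y`, which the Lipschitz bound dominates by `K e^{Ns} ‖x - y‖*`.
-/

open scoped BigOperators

/-- The fractional Volterra operator
`(T_{x₀} x)_k(t) = (x₀)_k + (1/Γ(α)) ∫_0^t (t-s)^{α-1} φ_k(x(s)) ds`. -/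
noncomputable def volterraOp {L : ℕ} (α : ℝ) (x₀ : Fin L → ℝ)
    (φ : (Fin L → ℝ) → (Fin L → ℝ)) (x : ℝ → Fin L → ℝ) (t : ℝ) (k : Fin L) : ℝ :=
  x₀ k + (1 / Real.Gamma α) * ∫ s in (0:ℝ)..t, (t - s) ^ (α - 1) * φ (x s) k

open Real Set MeasureTheory intervalIntegral

/-- The Riemann–Liouville fractional integral `I^α g (t)` with base point `0`. -/
noncomputable def rlIntegral (α : ℝ) (g : ℝ → ℝ) (t : ℝ) : ℝ :=
  1 / Gamma α * ∫ s in (0:ℝ)..t, (t - s) ^ (α - 1) * g s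

/-- One summand of the paper's norm `‖z‖*`, for the coordinate function `f = z_k`. -/
noncomputable def weightedSup (N T : ℝ) (f : ℝ → ℝ) : ℝ :=
  ⨆ t : Icc (0:ℝ) T, exp (-N * t) * |f t|

section Kernel

variable {α N t : ℝ}

lemma intervalIntegral_rpow_mul_exp_neg_mul_le_Gamma_div (hα : 0 < α) (hN : 0 < N)
    (ht : 0 ≤ t) : ∫ u in (0:ℝ)..t, u ^ (α - 1) * exp (-(N * u)) ≤ Gamma α / N ^ α := by
  have hint : IntegrableOn (fun u : ℝ => u ^ (α - 1) * exp (-(N * u))) (Ioi 0) := by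
    simpa [neg_mul] using
      integrableOn_rpow_mul_exp_neg_mul_rpow (p := 1) (by linarith : (-1:ℝ) < α - 1) one_pos hN
  calc ∫ u in (0:ℝ)..t, u ^ (α - 1) * exp (-(N * u))
      ≤ ∫ u in Ioi 0, u ^ (α - 1) * exp (-(N * u)) := by
        rw [integral_of_le ht]
        refine setIntegral_mono_set hint ?_ Ioc_subset_Ioi_self.eventuallyLE
        filter_upwards [self_mem_ae_restrict measurableSet_Ioi] with u (hu : 0 < u)
        positivity
    _ = Gamma α / N ^ α := by
        rw [integral_rpow_mul_exp_neg_mul_Ioi hα hN, div_rpow zero_le_one hN.le, one_rpow]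
        ring

lemma intervalIntegral_sub_rpow_mul_exp_le (hα : 0 < α) (hN : 0 < N) (ht : 0 ≤ t) :
    ∫ s in (0:ℝ)..t, (t - s) ^ (α - 1) * exp (N * s) ≤ Gamma α / N ^ α * exp (N * t) := by
  have hsplit : ∀ s, (t - s) ^ (α - 1) * exp (N * s)
      = exp (N * t) * ((t - s) ^ (α - 1) * exp (-(N * (t - s)))) := fun s => by
    rw [mul_left_comm, ← exp_add]; ring_nf
  simp only [hsplit, intervalIntegral.integral_const_mul]
  rw [integral_comp_sub_left (fun u => u ^ (α - 1) * exp (-(N * u))), sub_self, sub_zero,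
    mul_comm]
  gcongr
  exact intervalIntegral_rpow_mul_exp_neg_mul_le_Gamma_div hα hN ht

lemma intervalIntegrable_sub_rpow_mul {g : ℝ → ℝ} (hα : 0 < α) (ht : 0 ≤ t)
    (hg : ContinuousOn g (Icc 0 t)) :
    IntervalIntegrable (fun s => (t - s) ^ (α - 1) * g s) volume 0 t := by
  have hker : IntervalIntegrable (fun s => (t - s) ^ (α - 1)) volume 0 t := by
    simpa using ((intervalIntegrable_rpow' (by linarith : (-1:ℝ) < α - 1)
      (a := 0) (b := t)).comp_sub_left t).symm
  exact hker.mul_continuousOn (by rwa [uIcc_of_le ht])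

end Kernel

section RiemannLiouville

variable {α N C t : ℝ} {g h : ℝ → ℝ}

lemma rlIntegral_sub (hα : 0 < α) (ht : 0 ≤ t) (hg : ContinuousOn g (Icc 0 t))
    (hh : ContinuousOn h (Icc 0 t)) :
    rlIntegral α (fun s => g s - h s) t = rlIntegral α g t - rlIntegral α h t := by
  unfold rlIntegral
  rw [← mul_sub, ← integral_sub (intervalIntegrable_sub_rpow_mul hα ht hg)
    (intervalIntegrable_sub_rpow_mul hα ht hh)]
  simp only [mul_sub]

lemma exp_neg_mul_abs_rlIntegral_le (hα : 0 < α) (hN : 0 < N) (ht : 0 ≤ t)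
    (hg : ContinuousOn g (Icc 0 t)) (hgC : ∀ s ∈ Icc 0 t, |g s| ≤ C * exp (N * s)) :
    exp (-N * t) * |rlIntegral α g t| ≤ C / N ^ α := by
  have hC : 0 ≤ C := by simpa using (abs_nonneg _).trans (hgC 0 ⟨le_rfl, ht⟩)
  have hΓ : 0 < Gamma α := Gamma_pos_of_pos hα
  calc exp (-N * t) * |rlIntegral α g t|
      = exp (-N * t) / Gamma α * |∫ s in (0:ℝ)..t, (t - s) ^ (α - 1) * g s| := by
        rw [rlIntegral, abs_mul, abs_of_pos (one_div_pos.2 hΓ)]; ring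
    _ ≤ exp (-N * t) / Gamma α * ∫ s in (0:ℝ)..t, (t - s) ^ (α - 1) * (C * exp (N * s)) := by
        gcongr
        refine (abs_integral_le_integral_abs ht).trans (integral_mono_on ht
          (intervalIntegrable_sub_rpow_mul hα ht hg).abs
          (intervalIntegrable_sub_rpow_mul hα ht (by fun_prop)) fun s hs => ?_)
        have hts : 0 ≤ t - s := sub_nonneg.2 hs.2
        rw [abs_mul, abs_of_nonneg (rpow_nonneg hts _)]
        exact mul_le_mul_of_nonneg_left (hgC s hs) (rpow_nonneg hts _)
    _ = exp (-N * t) / Gamma α * (C * ∫ s in (0:ℝ)..t, (t - s) ^ (α - 1) * exp (N * s)) := by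
        congr 1
        rw [← intervalIntegral.integral_const_mul]
        exact integral_congr fun s _ => by ring
    _ ≤ exp (-N * t) / Gamma α * (C * (Gamma α / N ^ α * exp (N * t))) := by
        gcongr; exact intervalIntegral_sub_rpow_mul_exp_le hα hN ht
    _ = C / N ^ α := by
        rw [neg_mul, exp_neg]; field_simp

end RiemannLiouville

section WeightedSup

variable {N T s : ℝ} {f : ℝ → ℝ}

lemma weightedSup_nonneg : 0 ≤ weightedSup N T f :=
  Real.iSup_nonneg fun _ => by positivity

lemma abs_le_exp_mul_weightedSup (hf : ContinuousOn f (Icc 0 T)) (hs : s ∈ Icc 0 T) :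
    |f s| ≤ exp (N * s) * weightedSup N T f := by
  have hf' : Continuous (domRestrict (Icc 0 T) f) :=
    continuousOn_iff_continuous_domRestrict.1 hf
  have hbdd : BddAbove (range fun t : Icc (0:ℝ) T => exp (-N * t) * |f t|) :=
    (isCompact_range ((continuous_exp.comp (continuous_const.mul continuous_subtype_val)).mul
      hf'.abs)).bddAbove
  calc |f s| = exp (N * s) * (exp (-N * s) * |f s|) := by
        rw [← mul_assoc, ← exp_add]; simp
    _ ≤ exp (N * s) * weightedSup N T f := by
        gcongr; exact le_ciSup hbdd (⟨s, hs⟩ : Icc (0:ℝ) T)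

end WeightedSup

lemma nonneg_of_abs_apply_sub_le_mul_sum {ι : Type*} [Fintype ι] {K : ℝ}
    {φ : (ι → ℝ) → ι → ℝ} (k : ι) (hφ : ∀ u v : ι → ℝ, |φ u k - φ v k| ≤ K * ∑ j, |u j - v j|) :
    0 ≤ K := by
  classical
  simpa [Pi.single_apply, apply_ite] using (abs_nonneg _).trans (hφ 0 (Pi.single k 1))

section Volterra

variable {L : ℕ} {α K N T t : ℝ} {φ : (Fin L → ℝ) → (Fin L → ℝ)} {x₀ : Fin L → ℝ}
  {x y : ℝ → Fin L → ℝ}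

lemma volterraOp_eq_add_rlIntegral (k : Fin L) :
    volterraOp α x₀ φ x t k = x₀ k + rlIntegral α (fun s => φ (x s) k) t :=
  rfl

lemma sum_abs_sub_le_exp_mul_sum_weightedSup (hx : ContinuousOn x (Icc 0 T))
    (hy : ContinuousOn y (Icc 0 T)) (ht : t ∈ Icc 0 T) :
    ∑ j, |x t j - y t j| ≤ exp (N * t) * ∑ j, weightedSup N T (fun s => x s j - y s j) := by
  rw [Finset.mul_sum]
  exact Finset.sum_le_sum fun j _ => abs_le_exp_mul_weightedSup
    (((continuous_apply j).comp_continuousOn hx).sub ((continuous_apply j).comp_continuousOn hy)) ht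

lemma exp_neg_mul_abs_volterraOp_sub_le (hα : 0 < α) (hN : 0 < N) (hφc : Continuous φ)
    (hφ : ∀ (k : Fin L) (u v : Fin L → ℝ), |φ u k - φ v k| ≤ K * ∑ j : Fin L, |u j - v j|)
    (hx : ContinuousOn x (Icc 0 T)) (hy : ContinuousOn y (Icc 0 T)) (k : Fin L)
    (ht : t ∈ Icc 0 T) :
    exp (-N * t) * |volterraOp α x₀ φ x t k - volterraOp α x₀ φ y t k|
      ≤ K / N ^ α * ∑ j, weightedSup N T (fun s => x s j - y s j) := by
  have hsub : Icc 0 t ⊆ Icc 0 T := Icc_subset_Icc le_rfl ht.2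
  have hφx : ContinuousOn (fun s => φ (x s) k) (Icc 0 t) :=
    (continuous_apply k).comp_continuousOn (hφc.comp_continuousOn (hx.mono hsub))
  have hφy : ContinuousOn (fun s => φ (y s) k) (Icc 0 t) :=
    (continuous_apply k).comp_continuousOn (hφc.comp_continuousOn (hy.mono hsub))
  rw [volterraOp_eq_add_rlIntegral, volterraOp_eq_add_rlIntegral, add_sub_add_left_eq_sub,
    ← rlIntegral_sub hα ht.1 hφx hφy, ← mul_div_right_comm]
  refine exp_neg_mul_abs_rlIntegral_le hα hN ht.1 (hφx.sub hφy) fun s hs => ?_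
  calc |φ (x s) k - φ (y s) k| ≤ K * ∑ j, |x s j - y s j| := hφ k _ _
    _ ≤ K * (exp (N * s) * ∑ j, weightedSup N T (fun s => x s j - y s j)) := by
        gcongr
        · exact nonneg_of_abs_apply_sub_le_mul_sum k (hφ k)
        · exact sum_abs_sub_le_exp_mul_sum_weightedSup hx hy (hsub hs)
    _ = _ := by ring

end Volterra

theorem volterra_operator_weighted_contraction_estimate_general
    (T : ℝ) (L : ℕ) (α : ℝ) (hα : 0 < α)
    (K : ℝ) (N : ℝ) (hN : 0 < N)
    (φ : (Fin L → ℝ) → (Fin L → ℝ)) (hφc : Continuous φ)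
    (hφ : ∀ (k : Fin L) (u v : Fin L → ℝ), |φ u k - φ v k| ≤ K * ∑ j : Fin L, |u j - v j|)
    (x₀ : Fin L → ℝ)
    (x y : ℝ → Fin L → ℝ)
    (hx : ContinuousOn x (Set.Icc 0 T)) (hy : ContinuousOn y (Set.Icc 0 T)) :
    (∑ k : Fin L, ⨆ t : Set.Icc (0:ℝ) T,
        Real.exp (-N * (t : ℝ)) * |volterraOp α x₀ φ x t k - volterraOp α x₀ φ y t k|)
      ≤ ((L : ℝ) * K / N ^ α) *
        ∑ k : Fin L, ⨆ t : Set.Icc (0:ℝ) T, Real.exp (-N * (t : ℝ)) * |x t k - y t k| := by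
  set M := ∑ j, weightedSup N T (fun s => x s j - y s j)
  have hM : 0 ≤ M := Finset.sum_nonneg fun _ _ => weightedSup_nonneg
  calc (∑ k : Fin L, ⨆ t : Icc (0:ℝ) T,
        exp (-N * (t : ℝ)) * |volterraOp α x₀ φ x t k - volterraOp α x₀ φ y t k|)
      ≤ ∑ _k : Fin L, K / N ^ α * M :=
        Finset.sum_le_sum fun k _ => Real.iSup_le
          (fun t => exp_neg_mul_abs_volterraOp_sub_le hα hN hφc hφ hx hy k t.2)
          (by have := nonneg_of_abs_apply_sub_le_mul_sum k (hφ k); positivity)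
    _ = (L : ℝ) * K / N ^ α * M := by
        rw [Finset.sum_const, Finset.card_univ, Fintype.card_fin, nsmul_eq_mul]; ring

/-- For `0 < α < 1`, `φ` continuous and `K`-Lipschitz componentwise
(in the ℓ¹ sense), `x₀ ∈ ℝ^L` and `N > 0`, the Volterra operator satisfies
`‖T_{x₀} x − T_{x₀} y‖* ≤ (L·K/N^α)·‖x − y‖*` for all continuous `x, y : [0,T] → ℝ^L`. -/
theorem volterra_operator_weighted_contraction_estimate
    (T : ℝ) (hT : 0 < T) (L : ℕ) (hL : 1 ≤ L) (α : ℝ) (hα : 0 < α) (hα1 : α < 1)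
    (K : ℝ) (N : ℝ) (hN : 0 < N)
    (φ : (Fin L → ℝ) → (Fin L → ℝ)) (hφc : Continuous φ)
    (hφ : ∀ (k : Fin L) (u v : Fin L → ℝ), |φ u k - φ v k| ≤ K * ∑ j : Fin L, |u j - v j|)
    (x₀ : Fin L → ℝ)
    (x y : ℝ → Fin L → ℝ)
    (hx : ContinuousOn x (Set.Icc 0 T)) (hy : ContinuousOn y (Set.Icc 0 T)) :
    (∑ k : Fin L, ⨆ t : Set.Icc (0:ℝ) T,
        Real.exp (-N * (t : ℝ)) * |volterraOp α x₀ φ x t k - volterraOp α x₀ φ y t k|)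
      ≤ ((L : ℝ) * K / N ^ α) *
        ∑ k : Fin L, ⨆ t : Set.Icc (0:ℝ) T, Real.exp (-N * (t : ℝ)) * |x t k - y t k| :=
  volterra_operator_weighted_contraction_estimate_general T L α hα K N hN φ hφc hφ x₀ x y hx hy
end

section
/- Let 0 < α < 1 and let φ : ℝ^L → ℝ^L be continuous and K-Lipschitz componentwise (in the ℓ¹ sense) for some K > 0. Then for every initial value x₀ ∈ ℝ^L, the nonlinear Volterra integral equation of the second kind x(t) = x₀ + (1/Γ(α)) ∫_0^t (t−s)^{α−1} φ(x(s)) ds, t ∈ [0,T], has exactly one continuous solution x : [0,T] → ℝ^L. -/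
/-!
The Picard map `P x = x₀ + I^α (φ ∘ x)` acts on `C([0,T], E)`. Measured against the weight
`e^{rt}`, the kernel bound `∫₀ᵗ (t-s)^{α-1} e^{rs} ds ≤ Γ(α) e^{rt} / r^α` shows that one step
of `P` multiplies a weighted difference bound by `K / r^α` (the Bielecki-norm estimate).
Choosing `r^α = K + 1` and iterating, some power `P^N` is a contraction for the sup norm, so
Banach's fixed point theorem gives existence and uniqueness. Continuity of `I^α f` comes from
the substitution `s = t v`, which turns it into `t^α ∫₀¹ (1-v)^{α-1} f(tv) dv`, a continuous
function of `t` by dominated convergence.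
-/

open MeasureTheory Set Real Filter Topology
open scoped Interval

section FracIntegral

variable {E : Type*} [NormedAddCommGroup E] [NormedSpace ℝ E] {α t T : ℝ} {f g : ℝ → E}

/-- The Riemann–Liouville integral `I^α f`. -/
noncomputable def fracIntegral (α : ℝ) (f : ℝ → E) (t : ℝ) : E :=
  (Gamma α)⁻¹ • ∫ s in (0 : ℝ)..t, (t - s) ^ (α - 1) • f s

theorem intervalIntegrable_rpow_sub_smul (hα : 0 < α) (hf : ContinuousOn f (uIcc 0 t)) :
    IntervalIntegrable (fun s => (t - s) ^ (α - 1) • f s) volume 0 t := by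
  have hker := (intervalIntegral.intervalIntegrable_rpow' (a := 0) (b := t)
    (r := α - 1) (by linarith)).comp_sub_left t
  simp only [sub_zero, sub_self] at hker
  exact hker.symm.smul_continuousOn hf

theorem integral_rpow_sub_smul_eq_rpow_smul (hα : 0 < α) (ht : 0 ≤ t) :
    ∫ s in (0 : ℝ)..t, (t - s) ^ (α - 1) • f s
      = t ^ α • ∫ v in (0 : ℝ)..1, (1 - v) ^ (α - 1) • f (t * v) := by
  rcases ht.eq_or_lt with rfl | ht
  · simp [zero_rpow hα.ne']
  have hscale : ∀ v ∈ uIcc (0 : ℝ) 1, (t - t * v) ^ (α - 1) • f (t * v)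
      = t ^ (α - 1) • (1 - v) ^ (α - 1) • f (t * v) := by
    intro v hv
    rw [uIcc_of_le zero_le_one] at hv
    rw [smul_smul, ← mul_rpow ht.le (by linarith [hv.2]), mul_sub, mul_one]
  have hsub := intervalIntegral.smul_integral_comp_mul_left (a := 0) (b := 1)
    (fun s => (t - s) ^ (α - 1) • f s) t
  rw [mul_zero, mul_one] at hsub
  rw [← hsub, intervalIntegral.integral_congr hscale,
    intervalIntegral.integral_smul, smul_smul, ← rpow_one_add' ht.le (by linarith), add_sub_cancel]

theorem continuousOn_fracIntegral (hα : 0 < α) (hf : ContinuousOn f (Icc 0 T)) :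
    ContinuousOn (fracIntegral α f) (Icc 0 T) := by
  obtain ⟨M, hM⟩ := isCompact_Icc.exists_bound_of_continuousOn hf
  have hI : Ι (0 : ℝ) 1 ⊆ Icc 0 1 := by
    rw [uIoc_of_le zero_le_one]
    exact Ioc_subset_Icc_self
  have hmaps : ∀ {t v : ℝ}, t ∈ Icc 0 T → v ∈ Ι (0 : ℝ) 1 → t * v ∈ Icc 0 T := fun ht hv =>
    ⟨mul_nonneg ht.1 (hI hv).1, (mul_le_of_le_one_right ht.1 (hI hv).2).trans ht.2⟩
  have hunit : ContinuousOn (fun t => ∫ v in (0 : ℝ)..1, (1 - v) ^ (α - 1) • f (t * v))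
      (Icc 0 T) := by
    intro t₀ ht₀
    refine intervalIntegral.continuousWithinAt_of_dominated_interval
      (bound := fun v => (1 - v) ^ (α - 1) • M) ?_ ?_
      (intervalIntegrable_rpow_sub_smul hα continuousOn_const) ?_
    · filter_upwards [self_mem_nhdsWithin] with t ht
      refine (Measurable.aestronglyMeasurable (by fun_prop)).smul ?_
      exact (hf.comp (continuousOn_const.mul continuousOn_id) fun v hv => hmaps ht hv)
        |>.aestronglyMeasurable measurableSet_uIoc
    · filter_upwards [self_mem_nhdsWithin] with t ht
      refine Eventually.of_forall fun v hv => ?_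
      rw [norm_smul, norm_of_nonneg (rpow_nonneg (sub_nonneg.2 (hI hv).2) _), smul_eq_mul]
      exact mul_le_mul_of_nonneg_left (hM _ (hmaps ht hv)) (rpow_nonneg (sub_nonneg.2 (hI hv).2) _)
    · refine Eventually.of_forall fun v hv => ?_
      exact continuousWithinAt_const.smul ((hf _ (hmaps ht₀ hv)).comp
        (f := fun t => t * v) (continuousWithinAt_id.mul continuousWithinAt_const)
        fun t ht => hmaps ht hv)
  refine (((continuous_rpow_const hα.le).continuousOn.smul hunit).const_smul
    (Gamma α)⁻¹).congr fun t ht => ?_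
  rw [fracIntegral, integral_rpow_sub_smul_eq_rpow_smul hα ht.1]
  rfl

theorem integral_rpow_sub_mul_exp_le {r : ℝ} (hα : 0 < α) (hr : 0 < r) (ht : 0 ≤ t) :
    ∫ s in (0 : ℝ)..t, (t - s) ^ (α - 1) * exp (r * s) ≤ exp (r * t) * (Gamma α / r ^ α) := by
  have hreflect : ∫ s in (0 : ℝ)..t, (t - s) ^ (α - 1) * exp (r * s)
      = exp (r * t) * ∫ u in (0 : ℝ)..t, u ^ (α - 1) * exp (-(r * u)) := by
    have hsub := intervalIntegral.integral_comp_sub_left (a := 0) (b := t)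
      (fun u => u ^ (α - 1) * exp (-(r * u))) t
    rw [sub_self, sub_zero] at hsub
    rw [← hsub, ← intervalIntegral.integral_const_mul]
    refine intervalIntegral.integral_congr fun s _ => ?_
    rw [mul_left_comm, ← exp_add]
    ring_nf
  have hGamma : ∫ u in Ioi (0 : ℝ), u ^ (α - 1) * exp (-(r * u)) = Gamma α / r ^ α := by
    rw [integral_rpow_mul_exp_neg_mul_Ioi hα hr, div_rpow zero_le_one hr.le, one_rpow]
    ring
  have hint : IntegrableOn (fun u : ℝ => u ^ (α - 1) * exp (-(r * u))) (Ioi 0) :=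
    Integrable.of_integral_ne_zero (by rw [hGamma]; positivity)
  rw [hreflect, ← hGamma, intervalIntegral.integral_of_le ht]
  gcongr
  · filter_upwards [ae_restrict_mem measurableSet_Ioi] with u hu
    exact mul_nonneg (rpow_nonneg hu.le _) (exp_nonneg _)
  · exact Ioc_subset_Ioi_self

theorem fracIntegral_congr (ht : 0 ≤ t) (hfg : EqOn f g (Icc 0 t)) :
    fracIntegral α f t = fracIntegral α g t := by
  rw [fracIntegral, fracIntegral, intervalIntegral.integral_congr fun s hs => ?_]
  rw [uIcc_of_le ht] at hs
  rw [hfg hs]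

theorem fracIntegral_sub (hα : 0 < α) (hf : ContinuousOn f (uIcc 0 t))
    (hg : ContinuousOn g (uIcc 0 t)) :
    fracIntegral α f t - fracIntegral α g t = fracIntegral α (f - g) t := by
  simp only [fracIntegral, Pi.sub_apply, smul_sub, intervalIntegral.integral_sub
    (intervalIntegrable_rpow_sub_smul hα hf) (intervalIntegrable_rpow_sub_smul hα hg)]

theorem norm_fracIntegral_le_of_norm_le_exp {r C : ℝ} (hα : 0 < α) (hr : 0 < r) (ht : 0 ≤ t)
    (hf : ∀ s ∈ Icc 0 t, ‖f s‖ ≤ C * exp (r * s)) :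
    ‖fracIntegral α f t‖ ≤ C / r ^ α * exp (r * t) := by
  have hΓ : 0 < Gamma α := Gamma_pos_of_pos hα
  have hC : 0 ≤ C := by simpa using (norm_nonneg _).trans (hf 0 ⟨le_rfl, ht⟩)
  have hbound : ‖∫ s in (0 : ℝ)..t, (t - s) ^ (α - 1) • f s‖
      ≤ ∫ s in (0 : ℝ)..t, (t - s) ^ (α - 1) * (C * exp (r * s)) := by
    refine intervalIntegral.norm_integral_le_of_norm_le ht (ae_of_all _ fun s hs => ?_)
      (intervalIntegrable_rpow_sub_smul hα (by fun_prop))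
    have hker : 0 ≤ (t - s) ^ (α - 1) := rpow_nonneg (sub_nonneg.2 hs.2) _
    rw [norm_smul, norm_of_nonneg hker]
    exact mul_le_mul_of_nonneg_left (hf s (Ioc_subset_Icc_self hs)) hker
  calc ‖fracIntegral α f t‖
      ≤ (Gamma α)⁻¹ * (C * ∫ s in (0 : ℝ)..t, (t - s) ^ (α - 1) * exp (r * s)) := by
        rw [fracIntegral, norm_smul, norm_inv, norm_of_nonneg hΓ.le,
          ← intervalIntegral.integral_const_mul]
        refine mul_le_mul_of_nonneg_left (hbound.trans_eq ?_) (by positivity)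
        exact intervalIntegral.integral_congr fun s _ => by ring
    _ ≤ (Gamma α)⁻¹ * (C * (exp (r * t) * (Gamma α / r ^ α))) := by
        gcongr
        exact integral_rpow_sub_mul_exp_le hα hr ht
    _ = C / r ^ α * exp (r * t) := by
        field_simp

end FracIntegral

section Volterra

variable {E : Type*} [NormedAddCommGroup E] [NormedSpace ℝ E] {α T : ℝ} {K : NNReal} {φ : E → E}

def IsVolterraSolution (α T : ℝ) (x₀ : E) (φ : E → E) (x : ℝ → E) : Prop :=
  ContinuousOn x (Icc 0 T) ∧ ∀ t ∈ Icc 0 T, x t = x₀ + fracIntegral α (φ ∘ x) t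

noncomputable def volterraPicard (hα : 0 < α) (hT : 0 ≤ T) (x₀ : E) (hφ : Continuous φ)
    (x : C(Icc 0 T, E)) : C(Icc 0 T, E) where
  toFun t := x₀ + fracIntegral α (φ ∘ IccExtend hT x) t
  continuous_toFun := continuous_const.add
    (continuousOn_fracIntegral hα (hφ.comp x.continuous.Icc_extend').continuousOn).domRestrict

theorem volterraPicard_apply (hα : 0 < α) (hT : 0 ≤ T) (x₀ : E) (hφ : Continuous φ)
    (x : C(Icc 0 T, E)) (t : Icc 0 T) :
    volterraPicard hα hT x₀ hφ x t = x₀ + fracIntegral α (φ ∘ IccExtend hT x) t :=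
  rfl

variable (hα : 0 < α) (hT : 0 ≤ T) (x₀ : E)

theorem dist_volterraPicard_apply_le {r C : ℝ} (hr : 0 < r) (hφ : LipschitzWith K φ)
    {x y : C(Icc 0 T, E)} (hxy : ∀ t : Icc 0 T, dist (x t) (y t) ≤ C * exp (r * t))
    (t : Icc 0 T) :
    dist (volterraPicard hα hT x₀ hφ.continuous x t) (volterraPicard hα hT x₀ hφ.continuous y t)
      ≤ K / r ^ α * C * exp (r * t) := by
  have hcont : ∀ z : C(Icc 0 T, E), ContinuousOn (φ ∘ IccExtend hT z) (uIcc 0 t) :=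
    fun z => (hφ.continuous.comp z.continuous.Icc_extend').continuousOn
  rw [dist_eq_norm, volterraPicard_apply, volterraPicard_apply, add_sub_add_left_eq_sub,
    fracIntegral_sub hα (hcont x) (hcont y)]
  refine (norm_fracIntegral_le_of_norm_le_exp (C := K * C) hα hr t.2.1 fun s hs => ?_).trans_eq
    (by ring)
  have hsT : s ∈ Icc 0 T := ⟨hs.1, hs.2.trans t.2.2⟩
  rw [Pi.sub_apply, Function.comp_apply, Function.comp_apply, IccExtend_of_mem hT x hsT,
    IccExtend_of_mem hT y hsT, ← dist_eq_norm, mul_assoc]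
  exact (hφ.dist_le_mul _ _).trans (by gcongr; exact hxy ⟨s, hsT⟩)

theorem dist_iterate_volterraPicard_apply_le {r : ℝ} (hr : 0 < r) (hφ : LipschitzWith K φ)
    (x y : C(Icc 0 T, E)) (n : ℕ) (t : Icc 0 T) :
    dist ((volterraPicard hα hT x₀ hφ.continuous)^[n] x t)
        ((volterraPicard hα hT x₀ hφ.continuous)^[n] y t)
      ≤ (K / r ^ α) ^ n * dist x y * exp (r * t) := by
  induction n generalizing t with
  | zero =>
    rw [Function.iterate_zero_apply, Function.iterate_zero_apply, pow_zero, one_mul]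
    exact (x.dist_apply_le_dist t).trans
      (le_mul_of_one_le_right dist_nonneg (one_le_exp (mul_nonneg hr.le t.2.1)))
  | succ n ih =>
    rw [Function.iterate_succ_apply', Function.iterate_succ_apply', pow_succ', mul_assoc,
      mul_assoc]
    exact (dist_volterraPicard_apply_le hα hT x₀ hr hφ ih t).trans_eq (by ring)

theorem exists_contractingWith_iterate_volterraPicard [CompleteSpace E]
    (hφ : LipschitzWith K φ) :
    ∃ (N : ℕ) (C : NNReal), ContractingWith C (volterraPicard hα hT x₀ hφ.continuous)^[N] := by
  set r := ((K : ℝ) + 1) ^ α⁻¹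
  have hr : 0 < r := by positivity
  have hq : (K : ℝ) / r ^ α < 1 := by
    rw [rpow_inv_rpow (by positivity) hα.ne', div_lt_one (by positivity)]
    linarith
  obtain ⟨N, hN⟩ := exists_pow_lt_of_lt_one (exp_pos (-(r * T))) hq
  have hC : 0 ≤ (K / r ^ α) ^ N * exp (r * T) := by positivity
  refine ⟨N, ((K / r ^ α) ^ N * exp (r * T)).toNNReal, ?_, ?_⟩
  · rw [Real.toNNReal_lt_one]
    calc (K / r ^ α) ^ N * exp (r * T) < exp (-(r * T)) * exp (r * T) :=
          mul_lt_mul_of_pos_right hN (exp_pos _)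
      _ = 1 := by rw [← exp_add, neg_add_cancel, exp_zero]
  · refine LipschitzWith.of_dist_le_mul fun x y => ?_
    rw [Real.coe_toNNReal _ hC]
    refine (ContinuousMap.dist_le (by positivity)).2 fun t => ?_
    calc _ ≤ (K / r ^ α) ^ N * dist x y * exp (r * t) :=
          dist_iterate_volterraPicard_apply_le hα hT x₀ hr hφ x y N t
      _ ≤ (K / r ^ α) ^ N * dist x y * exp (r * T) := by gcongr; exact t.2.2
      _ = (K / r ^ α) ^ N * exp (r * T) * dist x y := by ring

theorem isVolterraSolution_IccExtend_of_isFixedPt {hφ : Continuous φ} {x : C(Icc 0 T, E)}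
    (hx : Function.IsFixedPt (volterraPicard hα hT x₀ hφ) x) :
    IsVolterraSolution α T x₀ φ (IccExtend hT x) := by
  refine ⟨x.continuous.Icc_extend'.continuousOn, fun t ht => ?_⟩
  rw [IccExtend_of_mem hT x ht]
  exact (DFunLike.congr_fun hx _).symm

theorem isFixedPt_volterraPicard_restrict {hφ : Continuous φ} {y : ℝ → E}
    (hy : IsVolterraSolution α T x₀ φ y) :
    Function.IsFixedPt (volterraPicard hα hT x₀ hφ)
      ⟨(Icc 0 T).domRestrict y, hy.1.domRestrict⟩ := by
  ext1 t
  refine (congrArg _ (fracIntegral_congr t.2.1 fun s hs => ?_)).trans (hy.2 t t.2).symm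
  rw [Function.comp_apply, Function.comp_apply, IccExtend_of_mem hT _ ⟨hs.1, hs.2.trans t.2.2⟩]
  rfl

theorem exists_isVolterraSolution_forall_eqOn {E : Type*} [NormedAddCommGroup E]
    [NormedSpace ℝ E] [CompleteSpace E] {α T : ℝ} {K : NNReal} {φ : E → E} (hα : 0 < α)
    (hT : 0 ≤ T) (x₀ : E) (hφ : LipschitzWith K φ) :
    ∃ x, IsVolterraSolution α T x₀ φ x ∧
      ∀ y, IsVolterraSolution α T x₀ φ y → EqOn y x (Icc 0 T) := by
  obtain ⟨N, C, hC⟩ := exists_contractingWith_iterate_volterraPicard hα hT x₀ hφ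
  refine ⟨IccExtend hT (hC.fixedPoint _),
    isVolterraSolution_IccExtend_of_isFixedPt hα hT x₀ hC.isFixedPt_fixedPoint_iterate,
    fun y hy t ht => ?_⟩
  rw [IccExtend_of_mem hT _ ht,
    ← hC.fixedPoint_unique ((isFixedPt_volterraPicard_restrict hα hT x₀ hy).iterate N)]
  rfl

theorem lipschitzWith_of_abs_apply_sub_le_mul_sum {ι : Type*} [Fintype ι] {K : ℝ}
    {φ : (ι → ℝ) → ι → ℝ} (hφ : ∀ k u v, |φ u k - φ v k| ≤ K * ∑ j, |u j - v j|) :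
    LipschitzWith (K.toNNReal * Fintype.card ι) φ := by
  refine LipschitzWith.of_dist_le_mul fun u v => (dist_pi_le_iff (by positivity)).2 fun k => ?_
  have hsum : ∑ j, |u j - v j| ≤ Fintype.card ι * dist u v := by
    calc ∑ j, |u j - v j| ≤ ∑ _j : ι, dist u v :=
          Finset.sum_le_sum fun j _ =>
            (Real.dist_eq (u j) (v j)).symm.trans_le (dist_le_pi_dist u v j)
      _ = Fintype.card ι * dist u v := by rw [Finset.sum_const, Finset.card_univ, nsmul_eq_mul]
  rw [Real.dist_eq, NNReal.coe_mul, Real.coe_toNNReal', NNReal.coe_natCast, mul_assoc]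
  exact (hφ k u v).trans <| mul_le_mul (le_max_left K 0) hsum
    (Finset.sum_nonneg fun j _ => abs_nonneg _) (le_max_right K 0)

theorem fracIntegral_apply {ι : Type*} [Fintype ι] {α t : ℝ} {f : ℝ → ι → ℝ} (hα : 0 < α)
    (hf : ContinuousOn f (uIcc 0 t)) (k : ι) :
    fracIntegral α f t k = 1 / Gamma α * ∫ s in (0 : ℝ)..t, (t - s) ^ (α - 1) * f s k := by
  rw [fracIntegral, Pi.smul_apply, smul_eq_mul, one_div]
  congr 1
  exact ((ContinuousLinearMap.proj (R := ℝ) (φ := fun _ : ι => ℝ) k).intervalIntegral_comp_comm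
    (intervalIntegrable_rpow_sub_smul hα hf)).symm

theorem isVolterraSolution_pi_iff {ι : Type*} [Fintype ι] {α T : ℝ} {x₀ : ι → ℝ}
    {φ : (ι → ℝ) → ι → ℝ} {x : ℝ → ι → ℝ} (hα : 0 < α) (hφ : Continuous φ) :
    IsVolterraSolution α T x₀ φ x ↔ ContinuousOn x (Icc 0 T) ∧ ∀ t ∈ Icc 0 T, ∀ k,
      x t k = x₀ k + 1 / Gamma α * ∫ s in (0 : ℝ)..t, (t - s) ^ (α - 1) * φ (x s) k := by
  refine and_congr_right fun hx => forall₂_congr fun t ht => ?_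
  have hφx : ContinuousOn (φ ∘ x) (uIcc 0 t) :=
    hφ.comp_continuousOn (hx.mono (by rw [uIcc_of_le ht.1]; exact Icc_subset_Icc_right ht.2))
  simp only [funext_iff, Pi.add_apply, fracIntegral_apply hα hφx, Function.comp_apply]

theorem volterra_equation_exists_unique_solution_general
    (T : ℝ) (hT : 0 < T) (L : ℕ) (α : ℝ) (hα : 0 < α)
    (K : ℝ)
    (φ : (Fin L → ℝ) → (Fin L → ℝ))
    (hφ : ∀ (k : Fin L) (u v : Fin L → ℝ), |φ u k - φ v k| ≤ K * ∑ j : Fin L, |u j - v j|)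
    (x₀ : Fin L → ℝ) :
    ∃ x : ℝ → Fin L → ℝ,
      (ContinuousOn x (Set.Icc 0 T) ∧
        ∀ t ∈ Set.Icc (0:ℝ) T, ∀ k : Fin L,
          x t k = x₀ k + (1 / Real.Gamma α) * ∫ s in (0:ℝ)..t, (t - s) ^ (α - 1) * φ (x s) k)
      ∧
      ∀ y : ℝ → Fin L → ℝ,
        (ContinuousOn y (Set.Icc 0 T) ∧
          ∀ t ∈ Set.Icc (0:ℝ) T, ∀ k : Fin L,
            y t k = x₀ k + (1 / Real.Gamma α) * ∫ s in (0:ℝ)..t, (t - s) ^ (α - 1) * φ (y s) k)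
        → ∀ t ∈ Set.Icc (0:ℝ) T, y t = x t := by
  have hφL := lipschitzWith_of_abs_apply_sub_le_mul_sum hφ
  obtain ⟨x, hx, hunique⟩ := exists_isVolterraSolution_forall_eqOn hα hT.le x₀ hφL
  have hsol (z : ℝ → Fin L → ℝ) := isVolterraSolution_pi_iff (T := T) (x₀ := x₀) (x := z) hα
    hφL.continuous
  exact ⟨x, (hsol x).1 hx, fun y hy => hunique y ((hsol y).2 hy)⟩

/-- For `0 < α < 1` and `φ : ℝ^L → ℝ^L` continuous and `K`-Lipschitz
componentwise (in the ℓ¹ sense) with `K > 0`, for every initial value `x₀ ∈ ℝ^L` the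
nonlinear Volterra integral equation of the second kind
`x(t) = x₀ + (1/Γ(α)) ∫_0^t (t-s)^{α-1} φ(x(s)) ds`, `t ∈ [0,T]`,
has exactly one continuous solution `x : [0,T] → ℝ^L` (unique up to its values on `[0,T]`). -/
theorem volterra_equation_exists_unique_solution
    (T : ℝ) (hT : 0 < T) (L : ℕ) (hL : 1 ≤ L) (α : ℝ) (hα : 0 < α) (hα1 : α < 1)
    (K : ℝ) (hK : 0 < K)
    (φ : (Fin L → ℝ) → (Fin L → ℝ)) (hφc : Continuous φ)
    (hφ : ∀ (k : Fin L) (u v : Fin L → ℝ), |φ u k - φ v k| ≤ K * ∑ j : Fin L, |u j - v j|)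
    (x₀ : Fin L → ℝ) :
    ∃ x : ℝ → Fin L → ℝ,
      (ContinuousOn x (Set.Icc 0 T) ∧
        ∀ t ∈ Set.Icc (0:ℝ) T, ∀ k : Fin L,
          x t k = x₀ k + (1 / Real.Gamma α) * ∫ s in (0:ℝ)..t, (t - s) ^ (α - 1) * φ (x s) k)
      ∧
      ∀ y : ℝ → Fin L → ℝ,
        (ContinuousOn y (Set.Icc 0 T) ∧
          ∀ t ∈ Set.Icc (0:ℝ) T, ∀ k : Fin L,
            y t k = x₀ k + (1 / Real.Gamma α) * ∫ s in (0:ℝ)..t, (t - s) ^ (α - 1) * φ (y s) k)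
        → ∀ t ∈ Set.Icc (0:ℝ) T, y t = x t :=
  volterra_equation_exists_unique_solution_general T hT L α hα K φ hφ x₀
end Volterra
end

section
/- Let 0 < α < 1 and let φ : ℝ^L → ℝ^L be continuous and K-Lipschitz componentwise (in the ℓ¹ sense) with K > 0. Let x, y : [0,T] → ℝ^L be continuous solutions of the Volterra equations x(t) = x₀ + (1/Γ(α)) ∫_0^t (t−s)^{α−1} φ(x(s)) ds and y(t) = y₀ + (1/Γ(α)) ∫_0^t (t−s)^{α−1} φ(y(s)) ds with initial values x₀, y₀ ∈ ℝ^L. If N > 0 satisfies L·K < N^{α}, then ‖x − y‖* ≤ (1 − L·K/N^{α})^{−1} · Σ_{k=1}^{L} |(x₀)_k − (y₀)_k|. -/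
/-!
Bielecki's weighted-norm argument. Against the weight `e^{-Nt}`, the Riemann–Liouville integral
`I^α` contracts by `1 / N^α`: if `|g s| ≤ C e^{N s}` on `[0, t]`, then
`|I^α g t| ≤ C e^{N t} / Γ(α) · ∫_0^t u^{α-1} e^{-N u} du ≤ C e^{N t} / N^α`,
the last integral being dominated by its value `Γ(α) / N^α` on `(0, ∞)`.
Subtracting the two Volterra equations and using the Lipschitz bound componentwise gives
`M ≤ S + (L K / N^α) M` for `M = ‖x - y‖*` and `S = ∑ |x₀ k - y₀ k|`, which is solved for `M`
since `L K / N^α < 1`.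
-/

open MeasureTheory Set

noncomputable section

def riemannLiouville (α : ℝ) (f : ℝ → ℝ) (t : ℝ) : ℝ :=
  (1 / Real.Gamma α) * ∫ s in (0:ℝ)..t, (t - s) ^ (α - 1) * f s

/-- Summed over the components, this is the norm `‖·‖*`. -/
def expWeightedSup (N T : ℝ) (z : ℝ → ℝ) : ℝ :=
  ⨆ t : Icc (0:ℝ) T, Real.exp (-N * t) * |z t|

end

lemma integral_rpow_mul_exp_neg_mul_le {α N t : ℝ} (hα : 0 < α) (hN : 0 < N) (ht : 0 ≤ t) :
    ∫ u in (0:ℝ)..t, u ^ (α - 1) * Real.exp (-(N * u)) ≤ Real.Gamma α / N ^ α := by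
  have hint : IntegrableOn (fun u : ℝ => u ^ (α - 1) * Real.exp (-(N * u))) (Ioi 0) := by
    simpa [Real.rpow_one] using
      integrableOn_rpow_mul_exp_neg_mul_rpow (p := 1) (by linarith) zero_lt_one hN
  calc ∫ u in (0:ℝ)..t, u ^ (α - 1) * Real.exp (-(N * u))
      ≤ ∫ u in Ioi 0, u ^ (α - 1) * Real.exp (-(N * u)) := by
        rw [intervalIntegral.integral_of_le ht]
        refine setIntegral_mono_set hint ?_ Ioc_subset_Ioi_self.eventuallyLE
        filter_upwards [self_mem_ae_restrict measurableSet_Ioi] with u (hu : 0 < u)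
        positivity
    _ = Real.Gamma α / N ^ α := by
        rw [Real.integral_rpow_mul_exp_neg_mul_Ioi hα hN, Real.div_rpow zero_le_one hN.le,
          Real.one_rpow]
        ring

lemma intervalIntegrable_rpow_sub_mul {α t : ℝ} {f : ℝ → ℝ} (hα : 0 < α) (ht : 0 ≤ t)
    (hf : ContinuousOn f (Icc 0 t)) :
    IntervalIntegrable (fun s => (t - s) ^ (α - 1) * f s) volume 0 t := by
  have hkernel : IntervalIntegrable (fun s => (t - s) ^ (α - 1)) volume 0 t := by
    simpa using ((intervalIntegral.intervalIntegrable_rpow' (a := 0) (b := t)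
      (by linarith : (-1:ℝ) < α - 1)).comp_sub_left t).symm
  exact hkernel.mul_continuousOn (by rwa [uIcc_of_le ht])

lemma riemannLiouville_sub {α t : ℝ} {f g : ℝ → ℝ} (hα : 0 < α) (ht : 0 ≤ t)
    (hf : ContinuousOn f (Icc 0 t)) (hg : ContinuousOn g (Icc 0 t)) :
    riemannLiouville α f t - riemannLiouville α g t = riemannLiouville α (f - g) t := by
  simp only [riemannLiouville, Pi.sub_apply, mul_sub,
    intervalIntegral.integral_sub (intervalIntegrable_rpow_sub_mul hα ht hf)
      (intervalIntegrable_rpow_sub_mul hα ht hg)]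

lemma abs_riemannLiouville_le {α N C t : ℝ} {g : ℝ → ℝ} (hα : 0 < α) (hN : 0 < N)
    (ht : 0 ≤ t) (hg : ContinuousOn g (Icc 0 t))
    (hbound : ∀ s ∈ Icc 0 t, |g s| ≤ C * Real.exp (N * s)) :
    |riemannLiouville α g t| ≤ C / N ^ α * Real.exp (N * t) := by
  have hC : 0 ≤ C := by simpa using (abs_nonneg _).trans (hbound 0 ⟨le_rfl, ht⟩)
  have hΓ : 0 < Real.Gamma α := Real.Gamma_pos_of_pos hα
  have hmajorant : IntervalIntegrable (fun s => (t - s) ^ (α - 1) * (C * Real.exp (N * s)))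
      volume 0 t :=
    intervalIntegrable_rpow_sub_mul hα ht (by fun_prop)
  -- substituting `u = t - s` turns the weight `e^{N s}` into `e^{N t} e^{-N u}`
  have hsubst : ∫ s in (0:ℝ)..t, (t - s) ^ (α - 1) * (C * Real.exp (N * s))
      = C * Real.exp (N * t) * ∫ u in (0:ℝ)..t, u ^ (α - 1) * Real.exp (-(N * u)) := by
    rw [← intervalIntegral.integral_const_mul]
    calc ∫ s in (0:ℝ)..t, (t - s) ^ (α - 1) * (C * Real.exp (N * s))
        = ∫ s in (0:ℝ)..t, C * Real.exp (N * t) * ((t - s) ^ (α - 1) * Real.exp (-(N * (t - s)))) :=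
          intervalIntegral.integral_congr fun s _ => by
            rw [show N * s = N * t + -(N * (t - s)) by ring, Real.exp_add]
            ring
      _ = _ := by
          rw [intervalIntegral.integral_comp_sub_left
            (fun u => C * Real.exp (N * t) * (u ^ (α - 1) * Real.exp (-(N * u)))) t]
          simp only [sub_self, sub_zero]
  have hintegral : |∫ s in (0:ℝ)..t, (t - s) ^ (α - 1) * g s|
      ≤ C * Real.exp (N * t) * (Real.Gamma α / N ^ α) :=
    calc |∫ s in (0:ℝ)..t, (t - s) ^ (α - 1) * g s|
        ≤ ∫ s in (0:ℝ)..t, |(t - s) ^ (α - 1) * g s| :=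
          intervalIntegral.abs_integral_le_integral_abs ht
      _ ≤ ∫ s in (0:ℝ)..t, (t - s) ^ (α - 1) * (C * Real.exp (N * s)) := by
          refine intervalIntegral.integral_mono_on ht
            (intervalIntegrable_rpow_sub_mul hα ht hg).abs hmajorant fun s hs => ?_
          have hkernel : 0 ≤ (t - s) ^ (α - 1) := Real.rpow_nonneg (by linarith [hs.2]) _
          rw [abs_mul, abs_of_nonneg hkernel]
          exact mul_le_mul_of_nonneg_left (hbound s hs) hkernel
      _ = C * Real.exp (N * t) * ∫ u in (0:ℝ)..t, u ^ (α - 1) * Real.exp (-(N * u)) := hsubst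
      _ ≤ C * Real.exp (N * t) * (Real.Gamma α / N ^ α) := by
          gcongr
          exact integral_rpow_mul_exp_neg_mul_le hα hN ht
  calc |riemannLiouville α g t|
      = 1 / Real.Gamma α * |∫ s in (0:ℝ)..t, (t - s) ^ (α - 1) * g s| := by
        rw [riemannLiouville, abs_mul, abs_of_pos (one_div_pos.mpr hΓ)]
    _ ≤ 1 / Real.Gamma α * (C * Real.exp (N * t) * (Real.Gamma α / N ^ α)) := by gcongr
    _ = C / N ^ α * Real.exp (N * t) := by field_simp

section expWeightedSup

variable {N T : ℝ} {z : ℝ → ℝ}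

lemma expWeightedSup_nonneg : 0 ≤ expWeightedSup N T z :=
  Real.iSup_nonneg fun _ => by positivity

lemma expWeightedSup_le {a : ℝ} (h : ∀ t ∈ Icc 0 T, Real.exp (-N * t) * |z t| ≤ a)
    (ha : 0 ≤ a) : expWeightedSup N T z ≤ a :=
  Real.iSup_le (fun t => h t t.2) ha

lemma abs_le_exp_mul_expWeightedSup (hz : ContinuousOn z (Icc 0 T)) {s : ℝ}
    (hs : s ∈ Icc 0 T) : |z s| ≤ Real.exp (N * s) * expWeightedSup N T z := by
  have hbdd : BddAbove (range fun t : Icc (0:ℝ) T => Real.exp (-N * t) * |z t|) := by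
    refine (isCompact_Icc.image_of_continuousOn (f := fun t => Real.exp (-N * t) * |z t|)
      (by fun_prop)).bddAbove.mono ?_
    rintro _ ⟨t, rfl⟩
    exact ⟨t, t.2, rfl⟩
  have hs' : Real.exp (-N * s) * |z s| ≤ expWeightedSup N T z := le_ciSup hbdd ⟨s, hs⟩
  calc |z s| = Real.exp (N * s) * (Real.exp (-N * s) * |z s|) := by
        rw [← mul_assoc, ← Real.exp_add, neg_mul, add_neg_cancel, Real.exp_zero, one_mul]
    _ ≤ Real.exp (N * s) * expWeightedSup N T z := by gcongr

end expWeightedSup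

lemma exp_neg_mul_mul_abs_add_le {N t a b B : ℝ} (hN : 0 ≤ N) (ht : 0 ≤ t)
    (hb : |b| ≤ B * Real.exp (N * t)) : Real.exp (-N * t) * |a + b| ≤ |a| + B := by
  have hweight : Real.exp (-N * t) ≤ 1 := Real.exp_le_one_iff.mpr (by nlinarith)
  calc Real.exp (-N * t) * |a + b| ≤ Real.exp (-N * t) * (|a| + B * Real.exp (N * t)) := by
        gcongr
        exact (abs_add_le a b).trans (by gcongr)
    _ = Real.exp (-N * t) * |a| + B := by
        rw [mul_add, mul_left_comm, ← Real.exp_add, neg_mul, neg_add_cancel, Real.exp_zero,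
          mul_one]
    _ ≤ |a| + B := by
        gcongr
        exact mul_le_of_le_one_left (abs_nonneg a) hweight

lemma exp_neg_mul_mul_abs_sub_le_of_eq_add_riemannLiouville {α N C t a b u v : ℝ}
    {f g : ℝ → ℝ} (hα : 0 < α) (hN : 0 < N) (ht : 0 ≤ t) (hf : ContinuousOn f (Icc 0 t))
    (hg : ContinuousOn g (Icc 0 t)) (hu : u = a + riemannLiouville α f t)
    (hv : v = b + riemannLiouville α g t)
    (hfg : ∀ s ∈ Icc 0 t, |f s - g s| ≤ C * Real.exp (N * s)) :
    Real.exp (-N * t) * |u - v| ≤ |a - b| + C / N ^ α := by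
  rw [hu, hv, add_sub_add_comm, riemannLiouville_sub hα ht hf hg]
  exact exp_neg_mul_mul_abs_add_le hN.le ht <| abs_riemannLiouville_le hα hN ht (hf.sub hg) hfg

lemma le_inv_one_sub_mul_of_le_add_mul {M S c : ℝ} (hc : c < 1) (h : M ≤ S + c * M) :
    M ≤ (1 - c)⁻¹ * S := by
  rw [← div_eq_inv_mul, le_div_iff₀ (by linarith)]
  linarith

theorem volterra_solutions_weighted_stability_estimate_general
    (T : ℝ) (L : ℕ) (α : ℝ) (hα : 0 < α)
    (K : ℝ) (hK : 0 < K)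
    (φ : (Fin L → ℝ) → (Fin L → ℝ)) (hφc : Continuous φ)
    (hφ : ∀ (k : Fin L) (u v : Fin L → ℝ), |φ u k - φ v k| ≤ K * ∑ j : Fin L, |u j - v j|)
    (x₀ y₀ : Fin L → ℝ)
    (x y : ℝ → Fin L → ℝ)
    (hx : ContinuousOn x (Set.Icc 0 T)) (hy : ContinuousOn y (Set.Icc 0 T))
    (hxsol : ∀ t ∈ Set.Icc (0:ℝ) T, ∀ k : Fin L,
      x t k = x₀ k + (1 / Real.Gamma α) * ∫ s in (0:ℝ)..t, (t - s) ^ (α - 1) * φ (x s) k)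
    (hysol : ∀ t ∈ Set.Icc (0:ℝ) T, ∀ k : Fin L,
      y t k = y₀ k + (1 / Real.Gamma α) * ∫ s in (0:ℝ)..t, (t - s) ^ (α - 1) * φ (y s) k)
    (N : ℝ) (hN : 0 < N) (hNK : (L : ℝ) * K < N ^ α) :
    (∑ k : Fin L, ⨆ t : Set.Icc (0:ℝ) T, Real.exp (-N * (t : ℝ)) * |x t k - y t k|)
      ≤ (1 - (L : ℝ) * K / N ^ α)⁻¹ * ∑ k : Fin L, |x₀ k - y₀ k| := by
  change ∑ k, expWeightedSup N T (fun t => x t k - y t k) ≤ _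
  set M := ∑ k, expWeightedSup N T (fun t => x t k - y t k)
  have hM_nonneg : 0 ≤ M := Finset.sum_nonneg fun _ _ => expWeightedSup_nonneg
  have hφx (k : Fin L) : ContinuousOn (fun s => φ (x s) k) (Icc 0 T) := by fun_prop
  have hφy (k : Fin L) : ContinuousOn (fun s => φ (y s) k) (Icc 0 T) := by fun_prop
  have hlip {s : ℝ} (hs : s ∈ Icc 0 T) (k : Fin L) :
      |φ (x s) k - φ (y s) k| ≤ K * M * Real.exp (N * s) :=
    calc |φ (x s) k - φ (y s) k| ≤ K * ∑ j, |x s j - y s j| := hφ k _ _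
      _ ≤ K * ∑ j, Real.exp (N * s) * expWeightedSup N T (fun t => x t j - y t j) := by
          gcongr with j
          exact abs_le_exp_mul_expWeightedSup (z := fun t => x t j - y t j) (by fun_prop) hs
      _ = K * M * Real.exp (N * s) := by rw [← Finset.mul_sum]; ring
  have hcomponent (k : Fin L) :
      expWeightedSup N T (fun t => x t k - y t k) ≤ |x₀ k - y₀ k| + K * M / N ^ α := by
    refine expWeightedSup_le (fun t ht => ?_) (by positivity)
    have hsub : Icc 0 t ⊆ Icc 0 T := Icc_subset_Icc_right ht.2
    exact exp_neg_mul_mul_abs_sub_le_of_eq_add_riemannLiouville hα hN ht.1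
      ((hφx k).mono hsub) ((hφy k).mono hsub) (hxsol t ht k) (hysol t ht k)
      fun s hs => hlip (hsub hs) k
  have hM : M ≤ ∑ k, |x₀ k - y₀ k| + L * K / N ^ α * M :=
    calc M ≤ ∑ k, (|x₀ k - y₀ k| + K * M / N ^ α) := Finset.sum_le_sum fun k _ => hcomponent k
      _ = ∑ k, |x₀ k - y₀ k| + L * K / N ^ α * M := by
        rw [Finset.sum_add_distrib, Finset.sum_const, Finset.card_univ, Fintype.card_fin,
          nsmul_eq_mul]
        ring
  exact le_inv_one_sub_mul_of_le_add_mul ((div_lt_one (by positivity)).2 hNK) hM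

/-- For `0 < α < 1` and `φ` continuous and `K`-Lipschitz componentwise with
`K > 0`, if `x, y : [0,T] → ℝ^L` are continuous solutions of the Volterra equations with
initial values `x₀, y₀`, and `N > 0` satisfies `L·K < N^α`, then
`‖x − y‖* ≤ (1 − L·K/N^α)⁻¹ · ∑_k |(x₀)_k − (y₀)_k|`. -/
theorem volterra_solutions_weighted_stability_estimate
    (T : ℝ) (hT : 0 < T) (L : ℕ) (hL : 1 ≤ L) (α : ℝ) (hα : 0 < α) (hα1 : α < 1)
    (K : ℝ) (hK : 0 < K)
    (φ : (Fin L → ℝ) → (Fin L → ℝ)) (hφc : Continuous φ)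
    (hφ : ∀ (k : Fin L) (u v : Fin L → ℝ), |φ u k - φ v k| ≤ K * ∑ j : Fin L, |u j - v j|)
    (x₀ y₀ : Fin L → ℝ)
    (x y : ℝ → Fin L → ℝ)
    (hx : ContinuousOn x (Set.Icc 0 T)) (hy : ContinuousOn y (Set.Icc 0 T))
    (hxsol : ∀ t ∈ Set.Icc (0:ℝ) T, ∀ k : Fin L,
      x t k = x₀ k + (1 / Real.Gamma α) * ∫ s in (0:ℝ)..t, (t - s) ^ (α - 1) * φ (x s) k)
    (hysol : ∀ t ∈ Set.Icc (0:ℝ) T, ∀ k : Fin L,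
      y t k = y₀ k + (1 / Real.Gamma α) * ∫ s in (0:ℝ)..t, (t - s) ^ (α - 1) * φ (y s) k)
    (N : ℝ) (hN : 0 < N) (hNK : (L : ℝ) * K < N ^ α) :
    (∑ k : Fin L, ⨆ t : Set.Icc (0:ℝ) T, Real.exp (-N * (t : ℝ)) * |x t k - y t k|)
      ≤ (1 - (L : ℝ) * K / N ^ α)⁻¹ * ∑ k : Fin L, |x₀ k - y₀ k| :=
  volterra_solutions_weighted_stability_estimate_general T L α hα K hK φ hφc hφ x₀ y₀ x y hx hy
    hxsol hysol N hN hNK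
end

section
/- Let 0 < α < 1 and let φ : ℝ^L → ℝ^L be continuous and K-Lipschitz componentwise (in the ℓ¹ sense) with K > 0. Then the solution of the fractional-order initial value problem is uniformly stable with respect to the initial condition: there is N > 0 with L·K < N^{α}, and for every ε > 0 there exists δ > 0 such that whenever x, y : [0,T] → ℝ^L are continuous solutions of the Volterra equations with initial values x₀ and y₀ satisfying Σ_{k=1}^{L} |(x₀)_k − (y₀)_k| < δ, one has ‖x − y‖* < ε. -/
open scoped BigOperators


open MeasureTheory

lemma auxIntegrable {α N : ℝ} (hα : 0 < α) (hN : 0 < N) :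
    IntegrableOn (fun u : ℝ => u ^ (α - 1) * Real.exp (-(N * u))) (Set.Ioi 0) := by
  have h0 := Real.GammaIntegral_convergent hα
  have h1 : IntegrableOn (fun u : ℝ => Real.exp (-(N * u)) * (N * u) ^ (α - 1))
      (Set.Ioi 0) := by
    have := (MeasureTheory.integrableOn_Ioi_comp_mul_left_iff
      (fun x : ℝ => Real.exp (-x) * x ^ (α - 1)) 0 hN).mpr
    simpa using this (by simpa using h0)
  have h2 := h1.const_mul (N ^ (1 - α))
  apply MeasureTheory.IntegrableOn.congr_fun h2 ?_ measurableSet_Ioi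
  intro u hu
  have hu0 : (0:ℝ) < u := hu
  simp only []
  rw [Real.mul_rpow hN.le hu0.le]
  have : N ^ (1 - α) * N ^ (α - 1) = 1 := by
    rw [← Real.rpow_add hN]; norm_num
  calc N ^ (1 - α) * (Real.exp (-(N * u)) * (N ^ (α - 1) * u ^ (α - 1)))
      = (N ^ (1 - α) * N ^ (α - 1)) * (u ^ (α - 1) * Real.exp (-(N * u))) := by ring
    _ = u ^ (α - 1) * Real.exp (-(N * u)) := by rw [this, one_mul]

lemma auxKey {α N : ℝ} (hα : 0 < α) (hN : 0 < N) {t : ℝ} (ht : 0 ≤ t) :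
    (∫ s in (0:ℝ)..t, (t - s) ^ (α - 1) * Real.exp (N * s)) ≤
      Real.exp (N * t) * (Real.Gamma α / N ^ α) := by
  have hInt := auxIntegrable hα hN
  have step1 : (∫ s in (0:ℝ)..t, (t - s) ^ (α - 1) * Real.exp (N * s))
      = ∫ u in (0:ℝ)..t, u ^ (α - 1) * Real.exp (N * (t - u)) := by
    have := intervalIntegral.integral_comp_sub_left (a := (0:ℝ)) (b := t)
      (fun u => u ^ (α - 1) * Real.exp (N * (t - u))) t
    simpa [sub_sub_cancel] using this
  rw [step1]
  have step2 : ∀ u : ℝ, u ^ (α - 1) * Real.exp (N * (t - u))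
      = Real.exp (N * t) * (u ^ (α - 1) * Real.exp (-(N * u))) := by
    intro u
    rw [mul_sub, Real.exp_sub, Real.exp_neg]
    ring
  simp_rw [step2]
  rw [intervalIntegral.integral_const_mul]
  have inner : (∫ u in (0:ℝ)..t, u ^ (α - 1) * Real.exp (-(N * u)))
      ≤ Real.Gamma α / N ^ α := by
    rw [intervalIntegral.integral_of_le ht]
    have hmono : (∫ u in Set.Ioc (0:ℝ) t, u ^ (α - 1) * Real.exp (-(N * u)))
        ≤ ∫ u in Set.Ioi (0:ℝ), u ^ (α - 1) * Real.exp (-(N * u)) := by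
      apply setIntegral_mono_set hInt
      · filter_upwards [self_mem_ae_restrict measurableSet_Ioi] with u hu
        have : (0:ℝ) < u := hu
        positivity
      · exact (Set.Ioc_subset_Ioi_self).eventuallyLE
    have hval := Real.integral_rpow_mul_exp_neg_mul_Ioi hα hN
    rw [hval] at hmono
    have : (1 / N) ^ α * Real.Gamma α = Real.Gamma α / N ^ α := by
      rw [one_div, Real.inv_rpow hN.le]
      field_simp
    linarith [hmono, this]
  exact mul_le_mul_of_nonneg_left inner (Real.exp_nonneg _)
/-- For `0 < α < 1` and `φ` continuous and `K`-Lipschitz componentwise with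
`K > 0`, the solution of the fractional-order initial value problem is uniformly stable
with respect to the initial condition: there is `N > 0` with `L·K < N^α`, and for every
`ε > 0` there is `δ > 0` such that whenever `x, y : [0,T] → ℝ^L` are continuous solutions
of the Volterra equations with initial values `x₀, y₀` satisfying
`∑_k |(x₀)_k − (y₀)_k| < δ`, one has `‖x − y‖* < ε`. -/
theorem fractional_evolutionary_game_uniformly_stable
    (T : ℝ) (hT : 0 < T) (L : ℕ) (hL : 1 ≤ L) (α : ℝ) (hα : 0 < α) (hα1 : α < 1)
    (K : ℝ) (hK : 0 < K)
    (φ : (Fin L → ℝ) → (Fin L → ℝ)) (hφc : Continuous φ)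
    (hφ : ∀ (k : Fin L) (u v : Fin L → ℝ), |φ u k - φ v k| ≤ K * ∑ j : Fin L, |u j - v j|) :
    ∃ N : ℝ, 0 < N ∧ (L : ℝ) * K < N ^ α ∧
      ∀ ε > (0:ℝ), ∃ δ > (0:ℝ),
        ∀ (x₀ y₀ : Fin L → ℝ) (x y : ℝ → Fin L → ℝ),
          ContinuousOn x (Set.Icc 0 T) → ContinuousOn y (Set.Icc 0 T) →
          (∀ t ∈ Set.Icc (0:ℝ) T, ∀ k : Fin L,
            x t k = x₀ k + (1 / Real.Gamma α) * ∫ s in (0:ℝ)..t, (t - s) ^ (α - 1) * φ (x s) k) →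
          (∀ t ∈ Set.Icc (0:ℝ) T, ∀ k : Fin L,
            y t k = y₀ k + (1 / Real.Gamma α) * ∫ s in (0:ℝ)..t, (t - s) ^ (α - 1) * φ (y s) k) →
          (∑ k : Fin L, |x₀ k - y₀ k|) < δ →
          (∑ k : Fin L, ⨆ t : Set.Icc (0:ℝ) T, Real.exp (-N * (t : ℝ)) * |x t k - y t k|) < ε := by
  have hL' : (1:ℝ) ≤ (L:ℝ) := by exact_mod_cast hL
  set c : ℝ := 2 * (L:ℝ) * K with hcdef
  have hc : 0 < c := by nlinarith
  set N : ℝ := c ^ (1/α) with hNdef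
  have hN : 0 < N := Real.rpow_pos_of_pos hc _
  have hNα : N ^ α = c := by
    rw [hNdef, ← Real.rpow_mul hc.le, one_div, inv_mul_cancel₀ hα.ne', Real.rpow_one]
  have hNαpos : 0 < N ^ α := by rw [hNα]; exact hc
  refine ⟨N, hN, by rw [hNα]; nlinarith, ?_⟩
  intro ε hε
  refine ⟨ε/2, by positivity, ?_⟩
  intro x₀ y₀ x y hx hy hxeq hyeq hδ
  have hΓ : 0 < Real.Gamma α := Real.Gamma_pos_of_pos hα
  haveI hne : Nonempty (Set.Icc (0:ℝ) T) := ⟨⟨0, le_refl _, hT.le⟩⟩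
  haveI : CompactSpace (Set.Icc (0:ℝ) T) := isCompact_iff_compactSpace.mp isCompact_Icc
  have hcont : ∀ k : Fin L, Continuous
      (fun t : Set.Icc (0:ℝ) T => Real.exp (-N * (t:ℝ)) * |x t k - y t k|) := by
    intro k
    have hx' : Continuous (fun t : Set.Icc (0:ℝ) T => x t k) :=
      (continuous_apply k).comp hx.restrict
    have hy' : Continuous (fun t : Set.Icc (0:ℝ) T => y t k) :=
      (continuous_apply k).comp hy.restrict
    exact (Real.continuous_exp.comp (continuous_const.mul continuous_subtype_val)).mul
      ((hx'.sub hy').abs)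
  have hbdd : ∀ k : Fin L, BddAbove (Set.range
      (fun t : Set.Icc (0:ℝ) T => Real.exp (-N * (t:ℝ)) * |x t k - y t k|)) :=
    fun k => (isCompact_range (hcont k)).bddAbove
  set M : ℝ := ∑ k : Fin L, ⨆ t : Set.Icc (0:ℝ) T,
    Real.exp (-N * (t:ℝ)) * |x t k - y t k| with hMdef
  have hSup0 : ∀ k : Fin L, (0:ℝ) ≤ ⨆ t : Set.Icc (0:ℝ) T,
      Real.exp (-N * (t:ℝ)) * |x t k - y t k| := by
    intro k
    refine le_ciSup_of_le (hbdd k) ⟨0, le_refl _, hT.le⟩ ?_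
    positivity
  have hM0 : 0 ≤ M := Finset.sum_nonneg fun k _ => hSup0 k
  have hgM : ∀ s ∈ Set.Icc (0:ℝ) T,
      (∑ j : Fin L, |x s j - y s j|) ≤ Real.exp (N * s) * M := by
    intro s hs
    have h2 : (∑ j : Fin L, Real.exp (-N * s) * |x s j - y s j|) ≤ M :=
      Finset.sum_le_sum fun j _ => le_ciSup (hbdd j) (⟨s, hs⟩ : Set.Icc (0:ℝ) T)
    have h3 : (∑ j : Fin L, |x s j - y s j|)
        = Real.exp (N * s) * ∑ j : Fin L, Real.exp (-N * s) * |x s j - y s j| := by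
      rw [Finset.mul_sum]
      refine Finset.sum_congr rfl fun j _ => ?_
      rw [← mul_assoc, ← Real.exp_add]
      have : N * s + -N * s = 0 := by ring
      rw [this, Real.exp_zero, one_mul]
    rw [h3]
    exact mul_le_mul_of_nonneg_left h2 (Real.exp_nonneg _)
  have hIbase : ∀ t ∈ Set.Icc (0:ℝ) T,
      IntervalIntegrable (fun s => (t - s) ^ (α - 1)) MeasureTheory.volume 0 t := by
    intro t ht
    have h1 : IntervalIntegrable (fun u : ℝ => u ^ (α - 1)) MeasureTheory.volume 0 t :=
      intervalIntegral.intervalIntegrable_rpow' (by linarith)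
    have h2 := h1.comp_sub_left t
    simpa using h2.symm
  have hImul : ∀ t ∈ Set.Icc (0:ℝ) T, ∀ g : ℝ → ℝ, ContinuousOn g (Set.Icc 0 T) →
      IntervalIntegrable (fun s => (t - s) ^ (α - 1) * g s) MeasureTheory.volume 0 t := by
    intro t ht g hg
    apply (hIbase t ht).mul_continuousOn
    apply hg.mono
    rw [Set.uIcc_of_le ht.1]
    exact Set.Icc_subset_Icc le_rfl ht.2
  have hφx : ∀ k : Fin L, ContinuousOn (fun s => φ (x s) k) (Set.Icc (0:ℝ) T) :=
    fun k => (continuous_apply k).comp_continuousOn (hφc.comp_continuousOn hx)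
  have hφy : ∀ k : Fin L, ContinuousOn (fun s => φ (y s) k) (Set.Icc (0:ℝ) T) :=
    fun k => (continuous_apply k).comp_continuousOn (hφc.comp_continuousOn hy)
  have key : ∀ k : Fin L, (⨆ t : Set.Icc (0:ℝ) T,
      Real.exp (-N * (t:ℝ)) * |x t k - y t k|) ≤ |x₀ k - y₀ k| + K * M / N ^ α := by
    intro k
    apply ciSup_le
    rintro ⟨t, ht⟩
    simp only [Set.mem_Icc] at ht ⊢
    have hIx : IntervalIntegrable (fun s => (t - s) ^ (α - 1) * φ (x s) k)
        MeasureTheory.volume 0 t := hImul t ht _ (hφx k)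
    have hIy : IntervalIntegrable (fun s => (t - s) ^ (α - 1) * φ (y s) k)
        MeasureTheory.volume 0 t := hImul t ht _ (hφy k)
    have hd : x t k - y t k = (x₀ k - y₀ k) + (1 / Real.Gamma α) *
        ∫ s in (0:ℝ)..t, (t - s) ^ (α - 1) * (φ (x s) k - φ (y s) k) := by
      rw [hxeq t ht k, hyeq t ht k]
      have hIdiff : (∫ s in (0:ℝ)..t, (t - s) ^ (α - 1) * (φ (x s) k - φ (y s) k))
          = (∫ s in (0:ℝ)..t, (t - s) ^ (α - 1) * φ (x s) k)
            - ∫ s in (0:ℝ)..t, (t - s) ^ (α - 1) * φ (y s) k := by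
        rw [← intervalIntegral.integral_sub hIx hIy]
        refine intervalIntegral.integral_congr fun s _ => ?_
        ring
      rw [hIdiff]; ring
    have hbound : |∫ s in (0:ℝ)..t, (t - s) ^ (α - 1) * (φ (x s) k - φ (y s) k)|
        ≤ K * M * (Real.exp (N * t) * (Real.Gamma α / N ^ α)) := by
      have hintL : IntervalIntegrable
          (fun s => |(t - s) ^ (α - 1) * (φ (x s) k - φ (y s) k)|)
          MeasureTheory.volume 0 t :=
        (hImul t ht _ ((hφx k).sub (hφy k))).abs
      have hintR : IntervalIntegrable
          (fun s => (t - s) ^ (α - 1) * (K * (Real.exp (N * s) * M)))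
          MeasureTheory.volume 0 t := by
        refine hImul t ht _ ?_
        exact (continuous_const.mul ((Real.continuous_exp.comp
          (continuous_const.mul continuous_id)).mul continuous_const)).continuousOn
      have hmono : (∫ s in (0:ℝ)..t, |(t - s) ^ (α - 1) * (φ (x s) k - φ (y s) k)|)
          ≤ ∫ s in (0:ℝ)..t, (t - s) ^ (α - 1) * (K * (Real.exp (N * s) * M)) := by
        apply intervalIntegral.integral_mono_on ht.1 hintL hintR
        intro s hs
        have hts : 0 ≤ t - s := by linarith [hs.2]
        rw [abs_mul, abs_of_nonneg (Real.rpow_nonneg hts _)]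
        refine mul_le_mul_of_nonneg_left ?_ (Real.rpow_nonneg hts _)
        calc |φ (x s) k - φ (y s) k| ≤ K * ∑ j : Fin L, |x s j - y s j| := hφ k _ _
          _ ≤ K * (Real.exp (N * s) * M) := by
              refine mul_le_mul_of_nonneg_left ?_ hK.le
              exact hgM s ⟨hs.1, hs.2.trans ht.2⟩
      have hval : (∫ s in (0:ℝ)..t, (t - s) ^ (α - 1) * (K * (Real.exp (N * s) * M)))
          = (K * M) * ∫ s in (0:ℝ)..t, (t - s) ^ (α - 1) * Real.exp (N * s) := by
        rw [← intervalIntegral.integral_const_mul]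
        refine intervalIntegral.integral_congr fun s _ => ?_
        ring
      calc |∫ s in (0:ℝ)..t, (t - s) ^ (α - 1) * (φ (x s) k - φ (y s) k)|
          ≤ ∫ s in (0:ℝ)..t, |(t - s) ^ (α - 1) * (φ (x s) k - φ (y s) k)| :=
            intervalIntegral.abs_integral_le_integral_abs ht.1
        _ ≤ ∫ s in (0:ℝ)..t, (t - s) ^ (α - 1) * (K * (Real.exp (N * s) * M)) := hmono
        _ = (K * M) * ∫ s in (0:ℝ)..t, (t - s) ^ (α - 1) * Real.exp (N * s) := hval
        _ ≤ (K * M) * (Real.exp (N * t) * (Real.Gamma α / N ^ α)) := by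
            refine mul_le_mul_of_nonneg_left (auxKey hα hN ht.1) (by positivity)
    have h5 : |x t k - y t k| ≤ |x₀ k - y₀ k|
        + (1 / Real.Gamma α) * (K * M * (Real.exp (N * t) * (Real.Gamma α / N ^ α))) := by
      rw [hd]
      refine (abs_add_le _ _).trans ?_
      gcongr
      rw [abs_mul, abs_of_nonneg (by positivity : (0:ℝ) ≤ 1 / Real.Gamma α)]
      exact mul_le_mul_of_nonneg_left hbound (by positivity)
    have hee : Real.exp (-N * t) * ((1 / Real.Gamma α) *
        (K * M * (Real.exp (N * t) * (Real.Gamma α / N ^ α)))) = K * M / N ^ α := by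
      rw [neg_mul, Real.exp_neg]
      field_simp
    have hexp1 : Real.exp (-N * t) ≤ 1 := by
      rw [Real.exp_le_one_iff]
      nlinarith [ht.1]
    calc Real.exp (-N * t) * |x t k - y t k|
        ≤ Real.exp (-N * t) * (|x₀ k - y₀ k|
          + (1 / Real.Gamma α) * (K * M * (Real.exp (N * t) * (Real.Gamma α / N ^ α)))) :=
          mul_le_mul_of_nonneg_left h5 (Real.exp_nonneg _)
      _ = Real.exp (-N * t) * |x₀ k - y₀ k| + K * M / N ^ α := by rw [mul_add, hee]
      _ ≤ |x₀ k - y₀ k| + K * M / N ^ α := by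
          have := mul_le_of_le_one_left (abs_nonneg (x₀ k - y₀ k)) hexp1
          linarith
  have hsum : M ≤ (∑ k : Fin L, |x₀ k - y₀ k|) + (L:ℝ) * (K * M / N ^ α) := by
    calc M ≤ ∑ k : Fin L, (|x₀ k - y₀ k| + K * M / N ^ α) :=
        Finset.sum_le_sum fun k _ => key k
      _ = (∑ k : Fin L, |x₀ k - y₀ k|) + (L:ℝ) * (K * M / N ^ α) := by
        rw [Finset.sum_add_distrib, Finset.sum_const, Finset.card_univ, Fintype.card_fin,
          nsmul_eq_mul]
  have hhalf : (L:ℝ) * (K * M / N ^ α) = M / 2 := by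
    rw [hNα, hcdef]
    have hL0 : (L:ℝ) ≠ 0 := by positivity
    field_simp
  rw [hhalf] at hsum
  linarith
end

section
/- Let a < b be reals, let 0 < α < 1, and let y : [a,b] → ℝ be continuously differentiable. Then for every x ∈ (a,b], the Riemann–Liouville fractional derivative of the shifted function y − y(a) coincides with the fractional integral of order 1−α of the derivative y′; that is, the function u ↦ (1/Γ(1−α)) ∫_a^u (u−t)^{−α} (y(t) − y(a)) dt is differentiable at x and its derivative equals (1/Γ(1−α)) ∫_a^x (x−t)^{−α} y′(t) dt. -/
/-!
Substituting `τ = u - t` and extending `y - y a` by `0` to the left of `a` (and constantly to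
the right of `b`) to a Lipschitz function `g`, the integral becomes
`∫ τ in 0..b - a, τ ^ (-α) * g (u - τ)` for `u ∈ [a, b]`, on an interval independent of `u`.
Differentiating under the integral sign is justified by the bound `Lip(g) * τ ^ (-α)`,
integrable because `α < 1`, since `g` is differentiable away from `a` and `b`. Because `g'`
vanishes to the left of `a`, the same substitution turns the resulting integral back into
`∫ t in a..x, (x - t) ^ (-α) * y' t`.
-/

open Set MeasureTheory Filter Topology NNReal
open scoped Interval

theorem hasDerivAt_intervalIntegral_mul_comp_sub {k g : ℝ → ℝ} {K : ℝ≥0} {L x : ℝ}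
    (hk : IntervalIntegrable k volume 0 L) (hg : LipschitzWith K g)
    (hdiff : ∀ᵐ τ, τ ∈ Ι 0 L → DifferentiableAt ℝ g (x - τ)) :
    IntervalIntegrable (fun τ => k τ * deriv g (x - τ)) volume 0 L ∧
      HasDerivAt (fun u => ∫ τ in 0..L, k τ * g (u - τ))
        (∫ τ in 0..L, k τ * deriv g (x - τ)) x := by
  have hk_meas : AEStronglyMeasurable k (volume.restrict (Ι 0 L)) := hk.def'.aestronglyMeasurable
  have hg_shift (u : ℝ) : Continuous fun τ => g (u - τ) :=
    hg.continuous.comp (continuous_const.sub continuous_id)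
  refine intervalIntegral.hasDerivAt_integral_of_dominated_loc_of_lip
    (bound := fun τ => |k τ| * K) univ_mem (.of_forall fun u => ?_) ?_ ?_
    (.of_forall fun τ _ => ?_) (hk.abs.mul_const _) ?_
  · exact hk_meas.mul (hg_shift u).aestronglyMeasurable
  · exact hk.mul_continuousOn (hg_shift x).continuousOn
  · exact hk_meas.mul
      ((measurable_deriv g).comp (measurable_const.sub measurable_id)).aestronglyMeasurable
  · refine LipschitzOnWith.of_dist_le_mul fun u _ v _ => ?_
    rw [Real.dist_eq, ← mul_sub, abs_mul, Real.coe_nnabs,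
      abs_of_nonneg (a := |k τ| * K) (by positivity), mul_assoc]
    gcongr
    simpa [Real.dist_eq] using hg.dist_le_mul (u - τ) (v - τ)
  · filter_upwards [hdiff] with τ hτ hmem
    exact ((hτ hmem).hasDerivAt.comp_sub_const x τ).const_mul (k τ)

theorem intervalIntegral_comp_sub_mul_eq_of_eq_zero {k h : ℝ → ℝ} {a u L : ℝ}
    (hu : a ≤ u) (huL : u - a ≤ L) (hh : ∀ t < a, h t = 0)
    (hint : IntervalIntegrable (fun τ => k τ * h (u - τ)) volume 0 L) :
    ∫ t in a..u, k (u - t) * h t = ∫ τ in 0..L, k τ * h (u - τ) := by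
  have h0 : (0 : ℝ) ≤ u - a := sub_nonneg.2 hu
  have htail : ∫ τ in (u - a)..L, k τ * h (u - τ) = 0 := by
    refine intervalIntegral.integral_zero_ae (.of_forall fun τ hτ => ?_)
    rw [uIoc_of_le huL] at hτ
    rw [hh _ (by linarith [hτ.1]), mul_zero]
  have hmem : u - a ∈ [[0, L]] := by rw [uIcc_of_le (h0.trans huL)]; exact ⟨h0, huL⟩
  calc ∫ t in a..u, k (u - t) * h t
      = ∫ τ in 0..(u - a), k τ * h (u - τ) := by
        simpa using intervalIntegral.integral_comp_sub_left (a := a) (b := u)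
          (fun τ => k τ * h (u - τ)) u
    _ = ∫ τ in 0..L, k τ * h (u - τ) := by
        rw [← intervalIntegral.integral_add_adjacent_intervals
          (hint.mono_set (uIcc_subset_uIcc_left hmem))
          (hint.mono_set (uIcc_subset_uIcc_right hmem)),
          htail, add_zero]

noncomputable def shiftedExtension {a b : ℝ} (hab : a ≤ b) (y : ℝ → ℝ) : ℝ → ℝ :=
  fun t => y (projIcc a b hab t) - y a

section ShiftedExtension

variable {a b : ℝ} (hab : a ≤ b) {y y' : ℝ → ℝ}

theorem shiftedExtension_of_mem {t : ℝ} (ht : t ∈ Icc a b) :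
    shiftedExtension hab y t = y t - y a := by
  simp [shiftedExtension, projIcc_of_mem hab ht]

theorem shiftedExtension_of_le_left {t : ℝ} (ht : t ≤ a) : shiftedExtension hab y t = 0 := by
  simp [shiftedExtension, projIcc_of_le_left hab ht]

theorem hasDerivAt_shiftedExtension_of_lt {t : ℝ} (ht : t < a) :
    HasDerivAt (shiftedExtension hab y) 0 t :=
  (hasDerivAt_const t 0).congr_of_eventuallyEq <|
    eventually_of_mem (Iio_mem_nhds ht) fun _ hs => shiftedExtension_of_le_left hab (le_of_lt hs)

theorem hasDerivAt_shiftedExtension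
    (hderiv : ∀ t ∈ Icc a b, HasDerivWithinAt y (y' t) (Icc a b) t) {t : ℝ}
    (ht : t ∈ Ioo a b) :
    HasDerivAt (shiftedExtension hab y) (y' t) t := by
  have hnhds : Icc a b ∈ 𝓝 t := Icc_mem_nhds ht.1 ht.2
  exact (((hderiv t (Ioo_subset_Icc_self ht)).hasDerivAt hnhds).sub_const (y a))
    |>.congr_of_eventuallyEq (eventually_of_mem hnhds fun s hs => shiftedExtension_of_mem hab hs)

theorem differentiableAt_shiftedExtension
    (hderiv : ∀ t ∈ Icc a b, HasDerivWithinAt y (y' t) (Icc a b) t) {t : ℝ}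
    (hta : t ≠ a) (htb : t < b) :
    DifferentiableAt ℝ (shiftedExtension hab y) t := by
  rcases hta.lt_or_gt with h | h
  · exact (hasDerivAt_shiftedExtension_of_lt hab h).differentiableAt
  · exact (hasDerivAt_shiftedExtension hab hderiv ⟨h, htb⟩).differentiableAt

theorem lipschitzWith_shiftedExtension
    (hderiv : ∀ t ∈ Icc a b, HasDerivWithinAt y (y' t) (Icc a b) t)
    (hcont : ContinuousOn y' (Icc a b)) : ∃ K, LipschitzWith K (shiftedExtension hab y) := by
  obtain ⟨C, hC⟩ := isCompact_Icc.exists_bound_of_continuousOn hcont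
  have hy : LipschitzOnWith C.toNNReal y (Icc a b) :=
    (convex_Icc a b).lipschitzOnWith_of_nnnorm_hasDerivWithin_le hderiv fun t ht => by
      rw [← NNReal.coe_le_coe, coe_nnnorm]
      exact (hC t ht).trans (Real.le_coe_toNNReal C)
  have hext := (lipschitzOnWith_iff_restrict.1 hy).comp (LipschitzWith.projIcc hab)
  refine ⟨C.toNNReal * 1, .of_dist_le_mul fun p q => ?_⟩
  simp only [shiftedExtension, dist_sub_right]
  exact hext.dist_le_mul p q

end ShiftedExtension

theorem caputo_eq_rl_of_shifted_general
    (a b : ℝ) (hab : a < b) (α : ℝ) (hα1 : α < 1)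
    (y y' : ℝ → ℝ)
    (hderiv : ∀ t ∈ Set.Icc a b, HasDerivWithinAt y (y' t) (Set.Icc a b) t)
    (hcont : ContinuousOn y' (Set.Icc a b))
    (x : ℝ) (hx : x ∈ Set.Ioc a b) :
    HasDerivWithinAt
      (fun u => (1 / Real.Gamma (1 - α)) * ∫ t in a..u, (u - t) ^ (-α) * (y t - y a))
      ((1 / Real.Gamma (1 - α)) * ∫ t in a..x, (x - t) ^ (-α) * y' t)
      (Set.Icc a b) x := by
  set g := shiftedExtension hab.le y
  obtain ⟨K, hg⟩ := lipschitzWith_shiftedExtension hab.le hderiv hcont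
  have hk : IntervalIntegrable (fun τ : ℝ => τ ^ (-α)) volume 0 (b - a) :=
    intervalIntegral.intervalIntegrable_rpow' (by linarith)
  have hdiff : ∀ᵐ τ, τ ∈ Ι 0 (b - a) → DifferentiableAt ℝ g (x - τ) := by
    filter_upwards [Measure.ae_ne volume (x - a)] with τ hτa hτ
    rw [uIoc_of_le (by linarith)] at hτ
    exact differentiableAt_shiftedExtension hab.le hderiv
      (by contrapose! hτa; linarith) (by linarith [hx.2, hτ.1])
  obtain ⟨hint, hG⟩ := hasDerivAt_intervalIntegral_mul_comp_sub hk hg hdiff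
  have hfixed : ∀ u ∈ Icc a b, ∫ t in a..u, (u - t) ^ (-α) * (y t - y a)
      = ∫ τ in 0..(b - a), τ ^ (-α) * g (u - τ) := by
    intro u hu
    rw [← intervalIntegral_comp_sub_mul_eq_of_eq_zero hu.1 (by linarith [hu.2])
      (fun t ht => shiftedExtension_of_le_left hab.le ht.le)
      (hk.mul_continuousOn (hg.continuous.comp (continuous_const.sub continuous_id)).continuousOn)]
    refine intervalIntegral.integral_congr fun t ht => ?_
    rw [uIcc_of_le hu.1] at ht
    rw [shiftedExtension_of_mem hab.le ⟨ht.1, ht.2.trans hu.2⟩]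
  have hderiv_eq : ∫ τ in 0..(b - a), τ ^ (-α) * deriv g (x - τ)
      = ∫ t in a..x, (x - t) ^ (-α) * y' t := by
    rw [← intervalIntegral_comp_sub_mul_eq_of_eq_zero hx.1.le (by linarith [hx.2])
      (fun t ht => (hasDerivAt_shiftedExtension_of_lt hab.le ht).deriv) hint]
    refine intervalIntegral.integral_congr_ae ?_
    filter_upwards [Measure.ae_ne volume x] with t htx ht
    rw [uIoc_of_le hx.1.le] at ht
    rw [(hasDerivAt_shiftedExtension hab.le hderiv
      ⟨ht.1, (lt_of_le_of_ne ht.2 htx).trans_le hx.2⟩).deriv]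
  rw [← hderiv_eq]
  exact (hG.hasDerivWithinAt.congr_of_mem hfixed (Ioc_subset_Icc_self hx)).const_mul _

/-- Let `a < b`, `0 < α < 1`, and let `y : [a,b] → ℝ` be continuously
differentiable. Then for every `x ∈ (a,b]`, the Riemann–Liouville fractional derivative of
the shifted function `y − y(a)` equals the fractional integral of order `1−α` of `y′`:
the function `u ↦ (1/Γ(1−α)) ∫_a^u (u−t)^{−α} (y(t) − y(a)) dt` is differentiable
(within `[a,b]`) at `x` with derivative `(1/Γ(1−α)) ∫_a^x (x−t)^{−α} y′(t) dt`. -/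
theorem caputo_eq_rl_of_shifted
    (a b : ℝ) (hab : a < b) (α : ℝ) (hα : 0 < α) (hα1 : α < 1)
    (y y' : ℝ → ℝ)
    (hderiv : ∀ t ∈ Set.Icc a b, HasDerivWithinAt y (y' t) (Set.Icc a b) t)
    (hcont : ContinuousOn y' (Set.Icc a b))
    (x : ℝ) (hx : x ∈ Set.Ioc a b) :
    HasDerivWithinAt
      (fun u => (1 / Real.Gamma (1 - α)) * ∫ t in a..u, (u - t) ^ (-α) * (y t - y a))
      ((1 / Real.Gamma (1 - α)) * ∫ t in a..x, (x - t) ^ (-α) * y' t)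
      (Set.Icc a b) x :=
  caputo_eq_rl_of_shifted_general a b hab α hα1 y y' hderiv hcont x hx
end
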